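/- arXiv:1602.06659 — 2 statements merged into one kernel-verified Lean document; each statement's English description precedes it below -/
import Mathlib

section
/- Let p ≥ 1 be an integer and let 𝒥 be a finite job set in which every job J has width 2^{p−1} < w(J) ≤ 2^p. Define the 'nice' job set 𝒥* by replacing each J ∈ 𝒥 with the job J* having width w(J*) = 2^p, height h(J), release time r(J*) = r(J), and deadline d(J*) = r(J) + max(d(J) − r(J), 2^p). Then OPT(𝒥*) ≤ 3^α · OPT(𝒥). -/
open scoped BigOperators NNReal

structure Job where
  r : ℤ
  d : ℤ
  w : ℤ
  h : ℝ

def Job.Valid (J : Job) : Prop := 1 ≤ J.w ∧ 0 < J.h ∧ J.r + J.w ≤ J.d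

def Feasible {ι : Type*} (job : ι → Job) (st : ι → ℤ) : Prop :=
  ∀ i, (job i).r ≤ st i ∧ st i + (job i).w ≤ (job i).d

noncomputable def load {ι : Type*} [Fintype ι] (job : ι → Job) (st : ι → ℤ) (t : ℤ) : ℝ :=
  ∑ i, if st i ≤ t ∧ t < st i + (job i).w then (job i).h else 0

noncomputable def cost {ι : Type*} [Fintype ι] (α : ℝ) (job : ι → Job) (st : ι → ℤ) : ℝ :=
  ∑' t : ℤ, load job st t ^ α

noncomputable def OPT {ι : Type*} [Fintype ι] (α : ℝ) (job : ι → Job) : ℝ :=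
  sInf {c : ℝ | ∃ st, Feasible job st ∧ cost α job st = c}

noncomputable def den (J : Job) : ℝ := (J.w * J.h) / (J.d - J.r)

noncomputable def avg {ι : Type*} [Fintype ι] (job : ι → Job) (t : ℤ) : ℝ :=
  ∑ i, if (job i).r ≤ t ∧ t < (job i).d then den (job i) else 0

/-!
Given a feasible schedule `st` of `𝒥`, start each widened job `J*` at `min (st J) (d(J*) - 2^p)`.
This moves `J` left by less than `K = 2^(p-1)`, so the window of `J*` lies inside
`[st J - K, st J + K + w(J))`, which is covered by the windows of `J` shifted by `-K`, `0` and `K`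
because `K < w(J)`. Hence the new load at `t` is at most the sum of the old loads at `t - K`, `t`,
`t + K`; the power mean inequality and the shift invariance of `∑' t` turn this into the factor
`3 ^ α`.
-/

open Finset

/-- The paper's `J*` for `W = 2^p`. -/
def Job.widen (J : Job) (W : ℤ) : Job := ⟨J.r, J.r + max (J.d - J.r) W, W, J.h⟩

namespace Job

variable {J : Job} {W K s t : ℤ}

lemma widen_feasible_start (hs : J.r ≤ s) :
    (J.widen W).r ≤ min s ((J.widen W).d - W) ∧
      min s ((J.widen W).d - W) + (J.widen W).w ≤ (J.widen W).d := by
  simp only [widen]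
  omega

lemma exists_shift_running_of_widen (hK : K ≤ J.w) (hW : W ≤ J.w + K)
    (hs : J.r ≤ s ∧ s + J.w ≤ J.d)
    (ht : min s ((J.widen W).d - W) ≤ t ∧ t < min s ((J.widen W).d - W) + W) :
    ∃ δ ∈ ({-K, 0, K} : Finset ℤ), s ≤ t + δ ∧ t + δ < s + J.w := by
  simp only [widen] at ht
  simp only [mem_insert, mem_singleton, exists_eq_or_imp, exists_eq_left]
  omega

end Job

section Load

variable {ι : Type*} [Fintype ι] {α : ℝ} {job job' : ι → Job} {st st' : ι → ℤ}

lemma load_nonneg (hh : ∀ i, 0 ≤ (job i).h) (st : ι → ℤ) (t : ℤ) : 0 ≤ load job st t :=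
  sum_nonneg fun i _ => by split <;> simp [hh i]

lemma cost_nonneg (hh : ∀ i, 0 ≤ (job i).h) (st : ι → ℤ) : 0 ≤ cost α job st :=
  tsum_nonneg fun t => Real.rpow_nonneg (load_nonneg hh st t) α

lemma summable_load_rpow (hα : α ≠ 0) (job : ι → Job) (st : ι → ℤ) :
    Summable fun t => load job st t ^ α := by
  refine summable_of_ne_finset_zero (s := univ.biUnion fun i => Ico (st i) (st i + (job i).w)) ?_
  intro t ht
  have hzero : load job st t = 0 :=
    sum_eq_zero fun i _ =>
      if_neg fun hrun => ht (mem_biUnion.mpr ⟨i, mem_univ i, mem_Ico.mpr hrun⟩)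
  rw [hzero, Real.zero_rpow hα]

lemma tsum_load_add_rpow (job : ι → Job) (st : ι → ℤ) (δ : ℤ) :
    ∑' t, load job st (t + δ) ^ α = cost α job st :=
  (Equiv.addRight δ).tsum_eq fun t => load job st t ^ α

lemma load_le_sum_load_add (hh : ∀ i, 0 ≤ (job i).h) (hh' : ∀ i, (job' i).h = (job i).h)
    (D : Finset ℤ)
    (hcover : ∀ i t, st' i ≤ t ∧ t < st' i + (job' i).w →
      ∃ δ ∈ D, st i ≤ t + δ ∧ t + δ < st i + (job i).w) (t : ℤ) :
    load job' st' t ≤ ∑ δ ∈ D, load job st (t + δ) := by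
  unfold load
  rw [sum_comm]
  refine sum_le_sum fun i _ => ?_
  have hterm_nonneg : ∀ δ ∈ D,
      0 ≤ if st i ≤ t + δ ∧ t + δ < st i + (job i).w then (job i).h else 0 :=
    fun δ _ => by split <;> simp [hh i]
  split
  case isTrue hrun =>
    obtain ⟨δ, hδ, hrunδ⟩ := hcover i t hrun
    calc (job' i).h = if st i ≤ t + δ ∧ t + δ < st i + (job i).w then (job i).h else 0 := by
          rw [if_pos hrunδ, hh']
      _ ≤ _ := single_le_sum hterm_nonneg hδ
  case isFalse => exact sum_nonneg hterm_nonneg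

lemma cost_le_card_rpow_mul_cost (hα : 1 ≤ α) (D : Finset ℤ)
    (hload : ∀ t, load job' st' t ≤ ∑ δ ∈ D, load job st (t + δ))
    (hh : ∀ i, 0 ≤ (job i).h) (hh' : ∀ i, 0 ≤ (job' i).h) :
    cost α job' st' ≤ (#D : ℝ) ^ α * cost α job st := by
  have hα0 : α ≠ 0 := by positivity
  have hpointwise : ∀ t, load job' st' t ^ α ≤
      (#D : ℝ) ^ (α - 1) * ∑ δ ∈ D, load job st (t + δ) ^ α := fun t =>
    calc load job' st' t ^ α ≤ (∑ δ ∈ D, load job st (t + δ)) ^ α :=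
          Real.rpow_le_rpow (load_nonneg hh' st' t) (hload t) (by linarith)
      _ ≤ _ := Real.rpow_sum_le_const_mul_sum_rpow_of_nonneg D hα fun δ _ => load_nonneg hh st _
  have hsummable : ∀ δ : ℤ, Summable fun t => load job st (t + δ) ^ α := fun δ =>
    (Equiv.addRight δ).summable_iff.mpr (summable_load_rpow hα0 job st)
  calc cost α job' st'
      ≤ ∑' t, (#D : ℝ) ^ (α - 1) * ∑ δ ∈ D, load job st (t + δ) ^ α :=
        (summable_load_rpow hα0 job' st').tsum_le_tsum hpointwise
          ((summable_sum fun δ _ => hsummable δ).mul_left _)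
    _ = (#D : ℝ) ^ (α - 1) * (#D * cost α job st) := by
        rw [tsum_mul_left, Summable.tsum_finsetSum fun δ _ => hsummable δ]
        simp only [tsum_load_add_rpow, sum_const, nsmul_eq_mul]
    _ = (#D : ℝ) ^ α * cost α job st := by
        rcases D.eq_empty_or_nonempty with rfl | hD
        · simp [Real.zero_rpow hα0]
        · rw [← mul_assoc, ← Real.rpow_add_one (Nat.cast_pos.mpr hD.card_pos).ne',
            sub_add_cancel]

lemma OPT_le_mul_OPT {C : ℝ} (hC : 0 ≤ C) (hh' : ∀ i, 0 ≤ (job' i).h)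
    (hfeasible : ∃ st, Feasible job st)
    (hsched : ∀ st, Feasible job st →
      ∃ st', Feasible job' st' ∧ cost α job' st' ≤ C * cost α job st) :
    OPT α job' ≤ C * OPT α job := by
  obtain ⟨st₀, hst₀⟩ := hfeasible
  have hbdd : BddBelow {c : ℝ | ∃ st, Feasible job' st ∧ cost α job' st = c} :=
    ⟨0, by rintro _ ⟨st, -, rfl⟩; exact cost_nonneg hh' st⟩
  rw [OPT, OPT, ← smul_eq_mul, ← Real.sInf_smul_of_nonneg hC]
  refine le_csInf (Set.smul_set_nonempty.mpr ⟨_, st₀, hst₀, rfl⟩) ?_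
  rintro _ ⟨_, ⟨st, hst, rfl⟩, rfl⟩
  obtain ⟨st', hst', hcost⟩ := hsched st hst
  exact (csInf_le hbdd ⟨st', hst', rfl⟩).trans hcost

end Load

theorem stmt8_general {ι : Type*} [Fintype ι] (α : ℝ) (hα : 1 < α) (p : ℕ)
    (job job' : ι → Job) (hv : ∀ i, (job i).Valid)
    (hw : ∀ i, (2 : ℤ) ^ (p - 1) < (job i).w ∧ (job i).w ≤ (2 : ℤ) ^ p)
    (hjob' : ∀ i, job' i =
      ⟨(job i).r, (job i).r + max ((job i).d - (job i).r) ((2 : ℤ) ^ p),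
        (2 : ℤ) ^ p, (job i).h⟩) :
    OPT α job' ≤ 3 ^ α * OPT α job := by
  obtain rfl : job' = fun i => (job i).widen (2 ^ p) := funext hjob'
  set K : ℤ := 2 ^ (p - 1)
  have hK : 0 < K := by positivity
  have hpow : (2 : ℤ) ^ p ≤ 2 * K :=
    calc (2 : ℤ) ^ p ≤ 2 ^ (p - 1 + 1) := pow_le_pow_right₀ (by norm_num) (by omega)
      _ = 2 * K := by ring
  have hh : ∀ i, 0 ≤ (job i).h := fun i => (hv i).2.1.le
  have hcard : #({-K, 0, K} : Finset ℤ) = 3 :=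
    card_eq_three.mpr ⟨-K, 0, K, by omega, by omega, by omega, rfl⟩
  refine OPT_le_mul_OPT (by positivity) hh
    ⟨fun i => (job i).r, fun i => ⟨le_rfl, (hv i).2.2⟩⟩ fun st hst => ?_
  have hload := load_le_sum_load_add (job' := fun i => (job i).widen (2 ^ p)) hh (fun _ => rfl)
    {-K, 0, K} fun i _ =>
      Job.exists_shift_running_of_widen (W := 2 ^ p) (hw i).1.le (by linarith [(hw i).1]) (hst i)
  refine ⟨_, fun i => Job.widen_feasible_start (hst i).1, ?_⟩
  simpa [hcard] using cost_le_card_rpow_mul_cost hα.le _ hload hh hh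

theorem stmt8 {ι : Type*} [Fintype ι] (α : ℝ) (hα : 1 < α) (p : ℕ) (hp : 1 ≤ p)
    (job job' : ι → Job) (hv : ∀ i, (job i).Valid)
    (hw : ∀ i, (2 : ℤ) ^ (p - 1) < (job i).w ∧ (job i).w ≤ (2 : ℤ) ^ p)
    (hjob' : ∀ i, job' i =
      ⟨(job i).r, (job i).r + max ((job i).d - (job i).r) ((2 : ℤ) ^ p),
        (2 : ℤ) ^ p, (job i).h⟩) :
    OPT α job' ≤ 3 ^ α * OPT α job :=
  stmt8_general α hα p job job' hv hw hjob'
end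

section
/- Let h > 0 be a real number and let 𝒥 be a finite job set in which every job has width 1 and height h. Then there exists a feasible schedule S of 𝒥 such that for every timeslot t ∈ ℤ, ℓ(S,t) ≤ h · ⌈avg(t)/h⌉. (This is the feasibility and load guarantee of algorithm 𝒰𝒰, which at each timeslot runs ⌈avg(t)/h⌉ available jobs chosen in EDF order.) -/
open scoped BigOperators NNReal

/-!
With unit widths, a feasible schedule is a choice of a slot `st i ∈ [r, d)` for every job, and
the load bound says that at most `c t = ⌈avg t / h⌉` jobs start at `t`. By Hall's theorem with
capacities such a choice exists once every set `s` of jobs satisfies `#s ≤ ∑ c t` over the union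
of their windows. This holds because each job spreads its whole volume `h` over its window as
density: `#s * h ≤ ∑ avg t ≤ h * ∑ c t`.
-/

open Finset

theorem Finset.exists_card_fiber_le_of_card_le_sum {ι α : Type*} [Fintype ι] [DecidableEq α]
    (W : ι → Finset α) (c : α → ℕ)
    (hall : ∀ s : Finset ι, #s ≤ ∑ a ∈ s.biUnion W, c a) :
    ∃ f : ι → α, (∀ i, f i ∈ W i) ∧ ∀ a, #{i | f i = a} ≤ c a := by
  classical
  -- split each `a` into `c a` slots `(a, k)` and match indices to slots by Hall's theorem
  let slots : Finset α → Finset (α × ℕ) := fun U => U.biUnion fun a => {a} ×ˢ range (c a)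
  have card_slots (U : Finset α) : #(slots U) = ∑ a ∈ U, c a := by
    rw [card_biUnion]
    · simp
    · intro a _ b _ hab
      simp only [disjoint_left, mem_product, mem_singleton]
      rintro p ⟨rfl, -⟩ ⟨rfl, -⟩
      exact hab rfl
  obtain ⟨g, hg_inj, hg_mem⟩ := (all_card_le_biUnion_card_iff_exists_injective
    (fun i => slots (W i))).mp fun s => by
      rw [← biUnion_biUnion, card_slots]
      exact hall s
  have hg (i : ι) : (g i).1 ∈ W i ∧ (g i).2 < c (g i).1 := by
    obtain ⟨a, ha, k, hk, hak⟩ : ∃ a ∈ W i, ∃ k < c a, (a, k) = g i := by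
      simpa [slots] using hg_mem i
    exact hak ▸ ⟨ha, hk⟩
  refine ⟨fun i => (g i).1, fun i => (hg i).1, fun a => ?_⟩
  simpa using card_le_card_of_injOn (t := range (c a)) (fun i => (g i).2)
    (fun i hi => by
      simp only [coe_filter, Set.mem_ofPred_eq, mem_univ, true_and] at hi
      simpa [← hi] using (hg i).2)
    (fun i hi j hj hij => by
      simp only [coe_filter, Set.mem_ofPred_eq, mem_univ, true_and] at hi hj
      exact hg_inj (Prod.ext (hi.trans hj.symm) hij))

namespace Job.Valid

theorem den_nonneg {J : Job} (hJ : J.Valid) : 0 ≤ den J := by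
  obtain ⟨hw, hh, hrd⟩ := hJ
  unfold den
  have : (J.r : ℝ) < J.d := by exact_mod_cast (by omega : J.r < J.d)
  positivity

theorem sum_den_Ico {J : Job} (hJ : J.Valid) : ∑ _t ∈ Ico J.r J.d, den J = J.w * J.h := by
  obtain ⟨hw, -, hrd⟩ := hJ
  have hlen : (((J.d - J.r).toNat : ℕ) : ℝ) = J.d - J.r := by
    exact_mod_cast Int.toNat_of_nonneg (by omega : 0 ≤ J.d - J.r)
  have hpos : (J.d : ℝ) - J.r ≠ 0 := by
    have : (J.r : ℝ) < J.d := by exact_mod_cast (by omega : J.r < J.d)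
    linarith
  rw [sum_const, Int.card_Ico, nsmul_eq_mul, hlen, den, mul_div_cancel₀ _ hpos]

end Job.Valid

section Averages

variable {ι : Type*} [Fintype ι] {job : ι → Job}

theorem avg_nonneg (hv : ∀ i, (job i).Valid) (t : ℤ) : 0 ≤ avg job t :=
  sum_nonneg fun i _ => ite_nonneg (hv i).den_nonneg le_rfl

theorem sum_mul_le_sum_avg (hv : ∀ i, (job i).Valid) (s : Finset ι) {U : Finset ℤ}
    (hU : ∀ i ∈ s, Ico (job i).r (job i).d ⊆ U) :
    ∑ i ∈ s, (job i).w * (job i).h ≤ ∑ t ∈ U, avg job t := by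
  classical
  calc ∑ i ∈ s, (job i).w * (job i).h
      = ∑ i ∈ s, ∑ t ∈ U, if (job i).r ≤ t ∧ t < (job i).d then den (job i) else 0 := by
        refine sum_congr rfl fun i hi => ?_
        rw [← (hv i).sum_den_Ico, ← sum_filter]
        congr 1
        ext t
        simpa [mem_Ico] using fun h₁ h₂ => hU i hi (mem_Ico.mpr ⟨h₁, h₂⟩)
    _ = ∑ t ∈ U, ∑ i ∈ s, if (job i).r ≤ t ∧ t < (job i).d then den (job i) else 0 :=
        sum_comm
    _ ≤ ∑ t ∈ U, avg job t := sum_le_sum fun t _ =>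
        sum_le_sum_of_subset_of_nonneg (subset_univ s) fun i _ _ =>
          ite_nonneg (hv i).den_nonneg le_rfl

theorem load_eq_card_mul {h : ℝ} (hw : ∀ i, (job i).w = 1) (hht : ∀ i, (job i).h = h)
    (st : ι → ℤ) (t : ℤ) : load job st t = #{i | st i = t} * h := by
  classical
  rw [load, ← nsmul_eq_mul, ← sum_const, sum_filter]
  refine sum_congr rfl fun i _ => ?_
  simp only [hw, hht]
  exact if_congr (by omega) rfl rfl

end Averages

theorem stmt14 {ι : Type*} [Fintype ι] (h : ℝ) (hh : 0 < h) (job : ι → Job)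
    (hv : ∀ i, (job i).Valid) (hw : ∀ i, (job i).w = 1) (hht : ∀ i, (job i).h = h) :
    ∃ st, Feasible job st ∧
      ∀ t : ℤ, load job st t ≤ h * (⌈avg job t / h⌉ : ℝ) := by
  classical
  set cap : ℤ → ℕ := fun t => ⌈avg job t / h⌉.toNat
  have cap_eq (t : ℤ) : (cap t : ℝ) = ⌈avg job t / h⌉ := by
    exact_mod_cast Int.toNat_of_nonneg (Int.ceil_nonneg (div_nonneg (avg_nonneg hv t) hh.le))
  have avg_le (t : ℤ) : avg job t ≤ cap t * h := by
    rw [cap_eq, ← div_le_iff₀ hh]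
    exact Int.le_ceil _
  set window : ι → Finset ℤ := fun i => Ico (job i).r (job i).d
  have hall (s : Finset ι) : #s ≤ ∑ t ∈ s.biUnion window, cap t := by
    refine Nat.cast_le.mp (le_of_mul_le_mul_right ?_ hh)
    calc (#s : ℝ) * h = ∑ i ∈ s, (job i).w * (job i).h := by simp [hw, hht]
      _ ≤ ∑ t ∈ s.biUnion window, avg job t :=
        sum_mul_le_sum_avg hv s fun i hi => subset_biUnion_of_mem window hi
      _ ≤ ∑ t ∈ s.biUnion window, cap t * h := sum_le_sum fun t _ => avg_le t
      _ = _ := by push_cast; rw [sum_mul]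
  obtain ⟨st, hst, hfiber⟩ := exists_card_fiber_le_of_card_le_sum _ cap hall
  refine ⟨st, fun i => ?_, fun t => ?_⟩
  · have := mem_Ico.mp (hst i)
    rw [hw]
    omega
  · rw [load_eq_card_mul hw hht, ← cap_eq, mul_comm h]
    gcongr
    exact_mod_cast hfiber t
end
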